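/- Let L ≥ 3 be odd and consider f(x) = (a(x)x₃^L, b(x)x₃, 0), g = (0,0,1) on ℝ³ with a, b smooth. For each integer k with 2 ≤ k ≤ L, the iterated bracket ad_g^k(f) = [...[[f,g],g],...,g] (k copies of g) has the form (A₁ₖ(x) + (−1)^k (∏_{i=0}^{k−1}(L−i)) a(x) x₃^{L−k}, A₂ₖ(x) + (−1)^k k (∂^{k−1}b/∂x₃^{k−1})(x), 0) for smooth functions A₁ₖ, A₂ₖ vanishing on {x₃ = 0}. -/

import Mathlib

noncomputable section

open Set

/-- Lie bracket with the paper's convention `[X,Y] = (DY)X - (DX)Y`. -/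
def lieB {n : ℕ} (X Y : (Fin n → ℝ) → (Fin n → ℝ)) : (Fin n → ℝ) → (Fin n → ℝ) :=
  fun x => fderiv ℝ Y x (X x) - fderiv ℝ X x (Y x)

/-- Lie derivative `(XV)(x) = DV(x)·X(x)`. -/
def lieD {n : ℕ} (X : (Fin n → ℝ) → (Fin n → ℝ)) (V : (Fin n → ℝ) → ℝ) : (Fin n → ℝ) → ℝ :=
  fun x => fderiv ℝ V x (X x)

/-- Partial derivative in the third coordinate on ℝ³. -/
def d3 (h : (Fin 3 → ℝ) → ℝ) : (Fin 3 → ℝ) → ℝ :=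
  fun x => fderiv ℝ h x (Pi.single 2 1)

/-- Iterated bracket with `Y` on the right: `adR X Y 0 = X`, `adR X Y (k+1) = [adR X Y k, Y]`. -/
def adR {n : ℕ} (X Y : (Fin n → ℝ) → (Fin n → ℝ)) : ℕ → (Fin n → ℝ) → (Fin n → ℝ)
  | 0 => X
  | k + 1 => lieB (adR X Y k) Y

lemma d3_contDiff {h : (Fin 3 → ℝ) → ℝ} (hh : ContDiff ℝ (⊤ : ℕ∞) h) : ContDiff ℝ (⊤ : ℕ∞) (d3 h) := by
  have : d3 h = fun x => (ContinuousLinearMap.apply ℝ ℝ (Pi.single 2 1 : Fin 3 → ℝ)) (fderiv ℝ h x) := rfl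
  rw [this]
  exact (ContinuousLinearMap.apply ℝ ℝ _).contDiff.comp (hh.fderiv_right (m := ((⊤ : ℕ∞) : WithTop ℕ∞)) (by exact_mod_cast le_top))

lemma d3_iter_contDiff {h : (Fin 3 → ℝ) → ℝ} (hh : ContDiff ℝ (⊤ : ℕ∞) h) (k : ℕ) :
    ContDiff ℝ (⊤ : ℕ∞) (d3^[k] h) := by
  induction k with
  | zero => exact hh
  | succ n ih => rw [Function.iterate_succ_apply']; exact d3_contDiff ih

lemma d3_mul {u v : (Fin 3 → ℝ) → ℝ} {x} (hu : DifferentiableAt ℝ u x)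
    (hv : DifferentiableAt ℝ v x) :
    d3 (fun y => u y * v y) x = d3 u x * v x + u x * d3 v x := by
  simp only [d3, fderiv_fun_mul hu hv, ContinuousLinearMap.add_apply, ContinuousLinearMap.smul_apply,
    smul_eq_mul]
  ring

lemma d3_add {u v : (Fin 3 → ℝ) → ℝ} {x} (hu : DifferentiableAt ℝ u x)
    (hv : DifferentiableAt ℝ v x) :
    d3 (fun y => u y + v y) x = d3 u x + d3 v x := by
  simp [d3, fderiv_fun_add hu hv]

lemma d3_x2 (x : Fin 3 → ℝ) : d3 (fun y : Fin 3 → ℝ => y 2) x = 1 := by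
  have : (fun y : Fin 3 → ℝ => y 2) = (ContinuousLinearMap.proj 2 : (Fin 3 → ℝ) →L[ℝ] ℝ) := rfl
  simp [d3, this, ContinuousLinearMap.fderiv]

lemma contDiff_x2pow (n : ℕ) : ContDiff ℝ (⊤ : ℕ∞) (fun y : Fin 3 → ℝ => y 2 ^ n) :=
  ((ContinuousLinearMap.proj 2 : (Fin 3 → ℝ) →L[ℝ] ℝ).contDiff).pow n

lemma d3_x2pow (n : ℕ) (x : Fin 3 → ℝ) :
    d3 (fun y : Fin 3 → ℝ => y 2 ^ (n+1)) x = (n+1) * x 2 ^ n := by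
  induction n with
  | zero => simpa using d3_x2 x
  | succ m ih =>
    have : (fun y : Fin 3 → ℝ => y 2 ^ (m+2)) = fun y => y 2 ^ (m+1) * y 2 := by
      funext y; ring
    have hv : DifferentiableAt ℝ (fun y : Fin 3 → ℝ => y 2) x :=
      ((ContinuousLinearMap.proj 2 : (Fin 3 → ℝ) →L[ℝ] ℝ).contDiff).differentiable one_ne_zero x
    rw [this, d3_mul ((contDiff_x2pow (m+1)).differentiable (by simp) x) hv, ih, d3_x2]
    push_cast; ring

lemma e3_eq : (![0,0,1] : Fin 3 → ℝ) = Pi.single 2 1 := by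
  funext i
  fin_cases i <;> simp [Pi.single, Function.update]

lemma fderiv_vec {u v : (Fin 3 → ℝ) → ℝ} {x : Fin 3 → ℝ} (w : Fin 3 → ℝ)
    (hu : DifferentiableAt ℝ u x) (hv : DifferentiableAt ℝ v x) :
    fderiv ℝ (fun y => ![u y, v y, (0:ℝ)]) x w = ![fderiv ℝ u x w, fderiv ℝ v x w, 0] := by
  have h0 : (fun y => ![u y, v y, (0:ℝ)] 0) = u := by funext y; simp
  have h1 : (fun y => ![u y, v y, (0:ℝ)] 1) = v := by funext y; simp
  have h2 : (fun y => ![u y, v y, (0:ℝ)] 2) = fun _ => (0:ℝ) := by funext y; simp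
  have hd : ∀ i, DifferentiableAt ℝ (fun y => ![u y, v y, (0:ℝ)] i) x := by
    intro i
    fin_cases i <;> simp only [Fin.isValue, Matrix.cons_val_zero, Matrix.cons_val_one,
      Matrix.head_cons, Fin.mk_one] <;>
      first
        | exact hu
        | exact hv
        | simpa using (differentiableAt_const (0:ℝ))
  rw [fderiv_pi hd]
  funext i
  fin_cases i <;>
    simp [ContinuousLinearMap.pi_apply, h0, h1, h2]

lemma bracket_step {u v : (Fin 3 → ℝ) → ℝ} {g : (Fin 3 → ℝ) → (Fin 3 → ℝ)}
    (hg : g = fun _ => ![0, 0, 1])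
    (hu : ContDiff ℝ (⊤ : ℕ∞) u) (hv : ContDiff ℝ (⊤ : ℕ∞) v) (x : Fin 3 → ℝ) :
    lieB (fun y => ![u y, v y, (0:ℝ)]) g x = ![-(d3 u x), -(d3 v x), 0] := by
  subst hg
  have hgd : fderiv ℝ (fun _ : Fin 3 → ℝ => (![0,0,1] : Fin 3 → ℝ)) x = 0 := fderiv_const_apply _
  simp only [lieB, hgd, ContinuousLinearMap.zero_apply]
  rw [fderiv_vec _ (hu.differentiable (by simp) x) (hv.differentiable (by simp) x)]
  funext i
  fin_cases i <;> simp [d3, e3_eq]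

lemma adR_formula {F G : (Fin 3 → ℝ) → ℝ} {g : (Fin 3 → ℝ) → (Fin 3 → ℝ)}
    (hg : g = fun _ => ![0, 0, 1]) (hF : ContDiff ℝ (⊤ : ℕ∞) F) (hG : ContDiff ℝ (⊤ : ℕ∞) G) (k : ℕ) :
    adR (fun y => ![F y, G y, (0:ℝ)]) g k =
      fun x => ![(-1:ℝ)^k * (d3^[k] F) x, (-1:ℝ)^k * (d3^[k] G) x, 0] := by
  induction k with
  | zero => funext x; simp [adR]
  | succ n ih =>
    funext x
    have : adR (fun y => ![F y, G y, (0:ℝ)]) g (n+1) = lieB (adR (fun y => ![F y, G y, (0:ℝ)]) g n) g := rfl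
    rw [this, ih]
    have hstep := bracket_step (u := fun y => (-1:ℝ)^n * (d3^[n] F) y)
      (v := fun y => (-1:ℝ)^n * (d3^[n] G) y) hg
      (contDiff_const.mul (d3_iter_contDiff hF n))
      (contDiff_const.mul (d3_iter_contDiff hG n)) x
    rw [hstep]
    have hm : ∀ (h : (Fin 3 → ℝ) → ℝ), ContDiff ℝ (⊤ : ℕ∞) h →
        d3 (fun y => (-1:ℝ)^n * h y) x = (-1:ℝ)^n * d3 h x := by
      intro h hh
      have := d3_mul (u := fun _ => (-1:ℝ)^n) (v := h)
        (differentiableAt_const _) (hh.differentiable (by simp) x)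
      rw [this]
      have : d3 (fun _ : Fin 3 → ℝ => (-1:ℝ)^n) x = 0 := by
        simp [d3, fderiv_const_apply]
      rw [this]; ring
    rw [hm _ (d3_iter_contDiff hF n), hm _ (d3_iter_contDiff hG n)]
    rw [Function.iterate_succ_apply', Function.iterate_succ_apply']
    funext i
    fin_cases i <;> simp <;> ring

lemma comp1 {a : (Fin 3 → ℝ) → ℝ} (ha : ContDiff ℝ (⊤ : ℕ∞) a) (L : ℕ) (hL : 1 ≤ L) :
    ∀ k : ℕ, 1 ≤ k → k ≤ L →
      ∃ C : (Fin 3 → ℝ) → ℝ, ContDiff ℝ (⊤ : ℕ∞) C ∧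
        d3^[k] (fun x => a x * x 2 ^ L) =
          fun x => x 2 ^ (L - k + 1) * C x +
            (∏ i ∈ Finset.range k, ((L:ℝ) - i)) * a x * x 2 ^ (L - k) := by
  intro k
  induction k with
  | zero => intro h; omega
  | succ n ih =>
    intro _ hkL
    rcases Nat.eq_zero_or_pos n with hn | hn
    · subst hn
      refine ⟨d3 a, d3_contDiff ha, ?_⟩
      funext x
      rw [Function.iterate_one]
      have hpL : (fun y : Fin 3 → ℝ => y 2 ^ L) = fun y => y 2 ^ ((L-1)+1) := by
        funext y; congr 1; omega
      rw [d3_mul (ha.differentiable (by simp) x) ((contDiff_x2pow L).differentiable (by simp) x)]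
      rw [hpL, d3_x2pow (L-1) x]
      have h1 : L - 1 + 1 = L := by omega
      have h2 : ((L - 1 : ℕ) : ℝ) + 1 = (L : ℝ) := by
        push_cast [Nat.cast_sub hL]; ring
      simp only [Finset.prod_range_one, Nat.cast_zero, sub_zero, h2]
      rw [show L - (0+1) + 1 = L from by omega, show L - (0+1) = L - 1 from by omega,
        Finset.prod_range_one]
      push_cast
      ring
    · obtain ⟨C, hC, hCeq⟩ := ih hn (by omega)
      have hnL : n < L := by omega
      set c : ℝ := ∏ i ∈ Finset.range n, ((L:ℝ) - i) with hc
      refine ⟨fun x => ((L:ℝ) - n + 1) * C x + x 2 * d3 C x + c * d3 a x, ?_, ?_⟩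
      · refine ContDiff.add (ContDiff.add ?_ ?_) ?_
        · exact contDiff_const.mul hC
        · exact (((ContinuousLinearMap.proj 2 : (Fin 3 → ℝ) →L[ℝ] ℝ).contDiff)).mul (d3_contDiff hC)
        · exact contDiff_const.mul (d3_contDiff ha)
      · funext x
        rw [Function.iterate_succ_apply', hCeq]
        have hdiff1 : DifferentiableAt ℝ (fun y : Fin 3 → ℝ => y 2 ^ (L - n + 1) * C y) x :=
          (((contDiff_x2pow _).mul hC).differentiable (by simp) x)
        have hdiff2 : DifferentiableAt ℝ (fun y : Fin 3 → ℝ => c * a y * y 2 ^ (L - n)) x :=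
          (((contDiff_const.mul ha).mul (contDiff_x2pow _)).differentiable (by simp) x)
        rw [d3_add hdiff1 hdiff2]
        rw [d3_mul ((contDiff_x2pow _).differentiable (by simp) x) (hC.differentiable (by simp) x)]
        rw [d3_mul ((contDiff_const.mul ha).differentiable (by simp) x)
          ((contDiff_x2pow _).differentiable (by simp) x)]
        rw [d3_mul (u := fun _ => c) (differentiableAt_const _) (ha.differentiable (by simp) x)]
        have hdc : d3 (fun _ : Fin 3 → ℝ => c) x = 0 := by simp [d3, fderiv_const_apply]
        rw [hdc]
        rw [show L - n + 1 = (L - n) + 1 from rfl, d3_x2pow (L - n) x]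
        rw [show L - n = (L - (n+1)) + 1 from by omega, d3_x2pow (L - (n+1)) x]
        rw [Finset.prod_range_succ, ← hc]
        have e3 : ((L - (n+1) : ℕ) : ℝ) + 1 = (L:ℝ) - n := by
          push_cast [Nat.cast_sub (show n+1 ≤ L by omega)]; ring
        have e6 : ((L - (n+1) + 1 : ℕ) : ℝ) = (L:ℝ) - n := by
          push_cast [Nat.cast_sub (show n+1 ≤ L by omega)]; ring
        have e4 : x 2 ^ (L - (n+1) + 1 + 1) = x 2 ^ (L - (n+1)) * x 2 * x 2 := by ring
        have e5 : x 2 ^ (L - (n+1) + 1) = x 2 ^ (L - (n+1)) * x 2 := by ring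
        rw [e3, e6, e4, e5]
        ring

lemma comp2 {b : (Fin 3 → ℝ) → ℝ} (hb : ContDiff ℝ (⊤ : ℕ∞) b) :
    ∀ k : ℕ, 1 ≤ k →
      d3^[k] (fun x => b x * x 2) =
        fun x => (d3^[k] b) x * x 2 + (k:ℝ) * (d3^[k-1] b) x := by
  intro k
  induction k with
  | zero => intro h; omega
  | succ n ih =>
    intro _
    rcases Nat.eq_zero_or_pos n with hn | hn
    · subst hn
      funext x
      rw [Function.iterate_one]
      have hv : DifferentiableAt ℝ (fun y : Fin 3 → ℝ => y 2) x :=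
        ((ContinuousLinearMap.proj 2 : (Fin 3 → ℝ) →L[ℝ] ℝ).contDiff).differentiable one_ne_zero x
      rw [d3_mul (hb.differentiable (by simp) x) hv, d3_x2]
      simp
    · funext x
      rw [Function.iterate_succ_apply', ih hn]
      have h1 : DifferentiableAt ℝ (fun y : Fin 3 → ℝ => (d3^[n] b) y * y 2) x :=
        ((d3_iter_contDiff hb n).mul
          (ContinuousLinearMap.proj 2 : (Fin 3 → ℝ) →L[ℝ] ℝ).contDiff).differentiable (by simp) x
      have h2 : DifferentiableAt ℝ (fun y : Fin 3 → ℝ => (n:ℝ) * (d3^[n-1] b) y) x :=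
        (contDiff_const.mul (d3_iter_contDiff hb (n-1))).differentiable (by simp) x
      rw [d3_add h1 h2]
      have hv : DifferentiableAt ℝ (fun y : Fin 3 → ℝ => y 2) x :=
        ((ContinuousLinearMap.proj 2 : (Fin 3 → ℝ) →L[ℝ] ℝ).contDiff).differentiable one_ne_zero x
      rw [d3_mul ((d3_iter_contDiff hb n).differentiable (by simp) x) hv, d3_x2]
      rw [d3_mul (u := fun _ => (n:ℝ)) (differentiableAt_const _)
        ((d3_iter_contDiff hb (n-1)).differentiable (by simp) x)]
      have hdc : d3 (fun _ : Fin 3 → ℝ => (n:ℝ)) x = 0 := by simp [d3, fderiv_const_apply]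
      rw [hdc]
      rw [← Function.iterate_succ_apply' d3 n b, ← Function.iterate_succ_apply' d3 (n-1) b,
        show (n-1).succ = n from by omega, show n + 1 - 1 = n from rfl]
      push_cast
      ring

theorem stmt17 (L : ℕ) (hL : 3 ≤ L) (hodd : Odd L)
    (a b : (Fin 3 → ℝ) → ℝ) (ha : ContDiff ℝ (⊤ : ℕ∞) a) (hb : ContDiff ℝ (⊤ : ℕ∞) b)
    (f g : (Fin 3 → ℝ) → (Fin 3 → ℝ))
    (hf : f = fun x => ![a x * x 2 ^ L, b x * x 2, 0])
    (hg : g = fun _ => ![0, 0, 1]) :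
    ∀ k : ℕ, 2 ≤ k → k ≤ L →
      ∃ A₁ A₂ : (Fin 3 → ℝ) → ℝ,
        ContDiff ℝ (⊤ : ℕ∞) A₁ ∧ ContDiff ℝ (⊤ : ℕ∞) A₂ ∧
        (∀ x : Fin 3 → ℝ, x 2 = 0 → A₁ x = 0 ∧ A₂ x = 0) ∧
        ∀ x : Fin 3 → ℝ,
          adR f g k x =
            ![A₁ x + (-1 : ℝ) ^ k * (∏ i ∈ Finset.range k, ((L : ℝ) - i)) * a x * x 2 ^ (L - k),
              A₂ x + (-1 : ℝ) ^ k * (k : ℝ) * (d3^[k - 1] b) x, 0] := by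
  intro k hk2 hkL
  set F : (Fin 3 → ℝ) → ℝ := fun x => a x * x 2 ^ L with hF
  set G : (Fin 3 → ℝ) → ℝ := fun x => b x * x 2 with hG
  have hFc : ContDiff ℝ (⊤ : ℕ∞) F := ha.mul (contDiff_x2pow L)
  have hGc : ContDiff ℝ (⊤ : ℕ∞) G :=
    hb.mul ((ContinuousLinearMap.proj 2 : (Fin 3 → ℝ) →L[ℝ] ℝ).contDiff)
  have hff : f = fun y => ![F y, G y, (0:ℝ)] := hf
  obtain ⟨C, hCc, hCeq⟩ := comp1 ha L (by omega) k (by omega) hkL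
  have hGeq := comp2 hb k (by omega)
  refine ⟨fun x => (-1:ℝ)^k * x 2 ^ (L - k + 1) * C x,
          fun x => (-1:ℝ)^k * (d3^[k] b) x * x 2, ?_, ?_, ?_, ?_⟩
  · exact (contDiff_const.mul (contDiff_x2pow _)).mul hCc
  · exact (contDiff_const.mul (d3_iter_contDiff hb k)).mul
      ((ContinuousLinearMap.proj 2 : (Fin 3 → ℝ) →L[ℝ] ℝ).contDiff)
  · intro x hx
    constructor
    · simp [hx]
    · simp [hx]
  · intro x
    rw [hff, adR_formula hg hFc hGc k]
    simp only
    rw [hCeq, hGeq]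
    have h2 : (-1:ℝ)^k * ((d3^[k] b) x * x 2 + (k:ℝ) * (d3^[k-1] b) x) =
        (-1:ℝ)^k * (d3^[k] b) x * x 2 + (-1:ℝ)^k * (k:ℝ) * (d3^[k-1] b) x := by ring
    have h1 : (-1:ℝ)^k * (x 2 ^ (L - k + 1) * C x +
          (∏ i ∈ Finset.range k, ((L:ℝ) - i)) * a x * x 2 ^ (L - k)) =
        (-1:ℝ)^k * x 2 ^ (L - k + 1) * C x +
          (-1:ℝ)^k * (∏ i ∈ Finset.range k, ((L:ℝ) - i)) * a x * x 2 ^ (L - k) := by ring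
    rw [h1, h2]
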